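/- arXiv:1701.07616 — 3 statements merged into one kernel-verified Lean document; each statement's English description precedes it below -/
import Mathlib

section
/- Let p ≥ 1, let T_p be an invertible p×p matrix over F₂, let n ≥ 0, and set G = T₂^{⊗n} ⊗ T_p with N = 2^n·p. For every K with 1 ≤ K ≤ N, let V(K) denote the K-th largest element (with multiplicity) of the multiset { S_{T₂^{⊗n}}(i) · S_{T_p}(j) : 1 ≤ i ≤ 2^n, 1 ≤ j ≤ p }. Then there exists a subset I ⊆ {0,…,N−1} of size K such that d_G(I) ≥ V(K), i.e., every nonzero F₂-linear combination of the rows of G indexed by I has Hamming weight at least V(K). -/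
open Matrix

noncomputable section

abbrev F2 : Type := ZMod 2

/-- The Arikan kernel `T₂ = ((1,0),(1,1))` over `F₂`. -/
def T2 : Matrix (Fin 2) (Fin 2) F2 := !![1, 0; 1, 1]

/-- Kronecker product of `Fin`-indexed square matrices, with the standard index
convention `(A ⊗ B) i j = A (i / n) (j / n) * B (i % n) (j % n)`. -/
def kron {m n : ℕ} (A : Matrix (Fin m) (Fin m) F2) (B : Matrix (Fin n) (Fin n) F2) :
    Matrix (Fin (m * n)) (Fin (m * n)) F2 :=
  fun i j => A i.divNat j.divNat * B i.modNat j.modNat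

/-- The `n`-fold Kronecker power of `T₂` (with `T₂^{⊗0}` the 1×1 identity). -/
def T2pow : (n : ℕ) → Matrix (Fin (2 ^ n)) (Fin (2 ^ n)) F2
  | 0 => 1
  | n + 1 => (kron T2 (T2pow n)).submatrix
      (Fin.cast (by rw [pow_succ, Nat.mul_comm]))
      (Fin.cast (by rw [pow_succ, Nat.mul_comm]))

/-- Minimum distance `d_G(I)`: the minimum Hamming weight of `u · G` over all
nonzero row vectors `u` with support contained in `I`. -/
def minDist {N : ℕ} (G : Matrix (Fin N) (Fin N) F2) (I : Finset (Fin N)) : ℕ :=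
  sInf {w | ∃ u : Fin N → F2, u ≠ 0 ∧ (∀ i, u i ≠ 0 → i ∈ I) ∧
    hammingNorm (Matrix.vecMul u G) = w}

/-- Minimum-distance spectrum `S_G(K)`: the maximum of `d_G(I)` over all
row-index sets `I` of size `K`. -/
def spec {N : ℕ} (G : Matrix (Fin N) (Fin N) F2) (K : ℕ) : ℕ :=
  sSup {d | ∃ I : Finset (Fin N), I.card = K ∧ minDist G I = d}

/-- `K`-th largest element (1-indexed, counted with multiplicity) of a
multiset of natural numbers. -/
def kthLargest (s : Multiset ℕ) (K : ℕ) : ℕ :=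
  ((s.sort (· ≤ ·)).reverse).getD (K - 1) 0

/-!
Plotkin's `(u | u + v)` construction drives the proof. With `T₂ = ((1,0),(1,1))`, the message
`(u₀, u₁)` is encoded by `T₂ ⊗ G` as `((u₀ + u₁) G, u₁ G)`. So on a row set `I₀ ⊔ I₁`, all nonzero
codewords have weight at least `t` exactly when `d_G(I₀) ≥ t` and `2 d_G(I₁) ≥ t`.

Testing this equivalence on optimal row sets bounds the spectrum of `T₂^{⊗(n+1)}`: `S_{n+1}(K)` is
at most the `K`-th largest element of `S_n ∪ 2 S_n`. Hence, for every threshold `t`, the products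
`S_{n+1}(i) S_p(j) ≥ t` are at most as many as the products `S_n(i) S_p(j) ≥ t` and
`2 S_n(i) S_p(j) ≥ t` together. Used constructively, the equivalence assembles a row set of size `K`
for `T₂^{⊗(n+1)} ⊗ T_p = T₂ ⊗ (T₂^{⊗n} ⊗ T_p)` from row sets for `T₂^{⊗n} ⊗ T_p` whose sizes are
bounded by these two counts, and induction on `n` proves the theorem.
-/

open Finset Kronecker

section Hamming

variable {ι κ β : Type*} [Fintype ι] [Fintype κ]

theorem hammingNorm_le_hammingNorm_add_add [AddZeroClass β] [DecidableEq β] (x y : ι → β) :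
    hammingNorm x ≤ hammingNorm (x + y) + hammingNorm y := by
  classical
  refine (card_le_card fun i hi => ?_).trans (card_union_le _ _)
  simp only [mem_filter, mem_univ, true_and, mem_union, Pi.add_apply] at hi ⊢
  by_cases hy : y i = 0 <;> simp_all

theorem hammingNorm_prod [Zero β] [DecidableEq β] (v : ι × κ → β) :
    hammingNorm v = ∑ i, hammingNorm fun k => v (i, k) := by
  simp only [hammingNorm, card_filter, Fintype.sum_prod_type]

theorem hammingNorm_comp_equiv [Zero β] [DecidableEq β] (f : ι → β) (e : κ ≃ ι) :
    hammingNorm (f ∘ e) = hammingNorm f :=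
  card_equiv e (by simp)

end Hamming

section KthLargest

variable {s : Multiset ℕ}

theorem kthLargest_antitone (s : Multiset ℕ) : Antitone (kthLargest s) := by
  intro a b hab
  have hsorted : ((s.sort (· ≤ ·)).reverse).Pairwise (· ≥ ·) :=
    List.pairwise_reverse.2 (Multiset.pairwise_sort s _)
  unfold kthLargest
  by_cases hb : b - 1 < ((s.sort (· ≤ ·)).reverse).length
  · rw [List.getD_eq_getElem _ _ hb, List.getD_eq_getElem _ _ (by omega)]
    exact hsorted.rel_get_of_le (a := ⟨a - 1, by omega⟩) (b := ⟨b - 1, hb⟩) (by simp; omega)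
  · rw [List.getD_eq_default _ _ (by omega)]
    exact Nat.zero_le _

theorem map_kthLargest_succ (s : Multiset ℕ) :
    (univ : Finset (Fin (Multiset.card s))).val.map (fun i => kthLargest s (i.val + 1)) = s := by
  rw [Fin.univ_val_map]
  conv_rhs => rw [← Multiset.sort_eq s (· ≤ ·), ← Multiset.coe_reverse]
  congr 1
  refine List.ext_getElem (by simp) fun i h₁ h₂ => ?_
  simp [kthLargest]

theorem countP_eq_card_filter_kthLargest (P : ℕ → Prop) [DecidablePred P] :
    s.countP P = #{i : Fin (Multiset.card s) | P (kthLargest s (i.val + 1))} := by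
  conv_lhs => rw [← map_kthLargest_succ s]
  rw [Multiset.countP_map]
  rfl

theorem le_countP_iff_kthLargest {P : ℕ → Prop} [DecidablePred P] (hP : Monotone P) {K : ℕ}
    (hK : 1 ≤ K) (hKs : K ≤ Multiset.card s) : K ≤ s.countP P ↔ P (kthLargest s K) := by
  have hQ : Antitone fun i => P (kthLargest s (i + 1)) :=
    hP.comp_antitone ((kthLargest_antitone s).comp_monotone fun _ _ h => Nat.add_le_add_right h 1)
  rw [countP_eq_card_filter_kthLargest, ← Nat.sub_add_cancel hK, Nat.add_one_le_iff]
  exact Fin.lt_card_filter_univ_iff_apply_of_imp (j := ⟨K - 1, by omega⟩) _ fun _ _ h => hQ h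

theorem monotone_le_two_mul (t : ℕ) : Monotone fun x => t ≤ 2 * x :=
  fun _ _ hab h => h.trans (Nat.mul_le_mul_left 2 hab)

end KthLargest

section Distance

variable {ι κ : Type*} [Fintype ι] [Fintype κ]

def DistAtLeast (G : Matrix ι ι F2) (I : Finset ι) (d : ℕ) : Prop :=
  ∀ u : ι → F2, u ≠ 0 → (∀ i, u i ≠ 0 → i ∈ I) → d ≤ hammingNorm (u ᵥ* G)

variable {G : Matrix ι ι F2} {I J : Finset ι} {d d' : ℕ}

theorem distAtLeast_empty : DistAtLeast G ∅ d := by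
  intro u hu hsupp
  obtain ⟨i, hi⟩ := Function.ne_iff.1 hu
  exact absurd (hsupp i hi) (notMem_empty i)

theorem DistAtLeast.mono (h : DistAtLeast G I d) (hJI : J ⊆ I) (hd : d' ≤ d) :
    DistAtLeast G J d' :=
  fun u hu hsupp => hd.trans (h u hu fun i hi => hJI (hsupp i hi))

theorem DistAtLeast.submatrix (h : DistAtLeast G I d) (e : κ ≃ ι) :
    DistAtLeast (G.submatrix e e) (I.map e.symm.toEmbedding) d := by
  intro u hu hsupp
  rw [submatrix_vecMul_equiv, hammingNorm_comp_equiv]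
  refine h _ (fun h0 => hu (funext fun k => by simpa using congrFun h0 (e k))) fun i hi => ?_
  simpa using hsupp _ hi

theorem distAtLeast_submatrix_iff (e : κ ≃ ι) {I : Finset κ} :
    DistAtLeast (G.submatrix e e) I d ↔ DistAtLeast G (I.map e.toEmbedding) d := by
  refine ⟨fun h => ?_, fun h => by simpa [Finset.map_map] using h.submatrix e⟩
  simpa [submatrix_submatrix, Finset.map_map] using h.submatrix e.symm

end Distance

section Spectrum

variable {N K : ℕ} {G : Matrix (Fin N) (Fin N) F2} {I : Finset (Fin N)} {d : ℕ}

theorem distAtLeast_minDist : DistAtLeast G I (minDist G I) :=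
  fun u hu hsupp => Nat.sInf_le ⟨u, hu, hsupp, rfl⟩

theorem DistAtLeast.le_minDist (h : DistAtLeast G I d) (hI : I.Nonempty) : d ≤ minDist G I := by
  obtain ⟨i, hi⟩ := hI
  refine le_csInf ⟨_, Pi.single i 1, ?_, fun j hj => ?_, rfl⟩ ?_
  · simp
  · by_contra hji
    exact hj (Pi.single_eq_of_ne (by rintro rfl; exact hji hi) _)
  · rintro _ ⟨u, hu, hsupp, rfl⟩
    exact h u hu hsupp

theorem minDist_le_card : minDist G I ≤ N := by
  by_cases hne : {w | ∃ u : Fin N → F2, u ≠ 0 ∧ (∀ i, u i ≠ 0 → i ∈ I) ∧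
      hammingNorm (u ᵥ* G) = w}.Nonempty
  · obtain ⟨_, u, hu, hsupp, rfl⟩ := hne
    exact (distAtLeast_minDist u hu hsupp).trans
      (hammingNorm_le_card_fintype.trans_eq (Fintype.card_fin N))
  · rw [minDist, Set.not_nonempty_iff_eq_empty.1 hne, Nat.sInf_empty]
    exact Nat.zero_le N

theorem bddAbove_minDist_card_eq :
    BddAbove {d | ∃ I : Finset (Fin N), I.card = K ∧ minDist G I = d} :=
  ⟨N, by rintro _ ⟨I, -, rfl⟩; exact minDist_le_card⟩

theorem minDist_le_spec (h : I.card = K) : minDist G I ≤ spec G K :=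
  le_csSup bddAbove_minDist_card_eq ⟨I, h, rfl⟩

theorem exists_minDist_eq_spec (hK : K ≤ N) :
    ∃ I : Finset (Fin N), I.card = K ∧ minDist G I = spec G K := by
  obtain ⟨I, -, hI⟩ := exists_subset_card_eq (s := (univ : Finset (Fin N))) (by simpa using hK)
  exact Nat.sSup_mem (s := {d | ∃ I : Finset (Fin N), I.card = K ∧ minDist G I = d})
    ⟨_, I, hI, rfl⟩ bddAbove_minDist_card_eq

theorem spec_eq_zero_of_lt (hK : N < K) : spec G K = 0 := by
  have : {d | ∃ I : Finset (Fin N), I.card = K ∧ minDist G I = d} = ∅ := by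
    refine Set.eq_empty_of_forall_notMem ?_
    rintro _ ⟨I, hI, -⟩
    have := hI ▸ card_le_univ I
    simp at this
    omega
  rw [spec, this, csSup_empty]
  rfl

theorem spec_le_card : spec G K ≤ N := by
  rcases le_or_gt K N with hK | hK
  · obtain ⟨I, -, hI⟩ := exists_minDist_eq_spec (G := G) hK
    exact hI ▸ minDist_le_card
  · rw [spec_eq_zero_of_lt hK]
    exact Nat.zero_le N

theorem spec_antitoneOn : AntitoneOn (spec G) (Set.Ici 1) := by
  intro K hK L _ hKL
  rcases le_or_gt L N with hL | hL
  · obtain ⟨I, hIcard, hI⟩ := exists_minDist_eq_spec (G := G) hL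
    obtain ⟨J, hJI, hJcard⟩ := exists_subset_card_eq (hIcard ▸ hKL)
    have hJ : J.Nonempty := card_pos.1 (by simp only [Set.mem_Ici] at hK; omega)
    rw [← hI]
    exact ((distAtLeast_minDist.mono hJI le_rfl).le_minDist hJ).trans (minDist_le_spec hJcard)
  · rw [spec_eq_zero_of_lt hL]
    exact Nat.zero_le _

def specMultiset (G : Matrix (Fin N) (Fin N) F2) : Multiset ℕ :=
  (univ : Finset (Fin N)).val.map fun i => spec G (i.val + 1)

theorem card_specMultiset : Multiset.card (specMultiset G) = N := by
  simp [specMultiset]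

theorem countP_specMultiset (P : ℕ → Prop) [DecidablePred P] :
    (specMultiset G).countP P = #{i : Fin N | P (spec G (i.val + 1))} :=
  Multiset.countP_map _ _ _

theorem le_countP_specMultiset_iff {P : ℕ → Prop} [DecidablePred P] (hP : Monotone P)
    (hK : 1 ≤ K) (hKN : K ≤ N) : K ≤ (specMultiset G).countP P ↔ P (spec G K) := by
  have hQ : Antitone fun i => P (spec G (i + 1)) :=
    hP.comp_antitone fun i j hij => spec_antitoneOn (by simp) (by simp) (by omega)
  rw [countP_specMultiset, ← Nat.sub_add_cancel hK, Nat.add_one_le_iff]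
  exact Fin.lt_card_filter_univ_iff_apply_of_imp (j := ⟨K - 1, by omega⟩) _ fun _ _ h => hQ h

theorem countP_specMultiset_le {s : Multiset ℕ} (hs : Multiset.card s = N)
    (hG : ∀ k, 1 ≤ k → k ≤ N → spec G k ≤ kthLargest s k) {P : ℕ → Prop} [DecidablePred P]
    (hP : Monotone P) :
    (specMultiset G).countP P ≤ s.countP P := by
  subst hs
  rw [countP_specMultiset, countP_eq_card_filter_kthLargest]
  refine card_le_card fun i hi => ?_
  simp only [mem_filter, mem_univ, true_and] at hi ⊢
  exact hP (hG _ (Nat.le_add_left 1 _) i.isLt) hi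

end Spectrum

section Plotkin

variable {κ : Type*} {I₀ I₁ : Finset κ}

theorem hammingNorm_vecMul_T2_kronecker [Fintype κ] (G : Matrix κ κ F2) (w : Fin 2 × κ → F2) :
    hammingNorm (w ᵥ* (T2 ⊗ₖ G)) =
      hammingNorm ((fun b => w (0, b) + w (1, b)) ᵥ* G) +
        hammingNorm ((fun b => w (1, b)) ᵥ* G) := by
  rw [hammingNorm_prod, Fin.sum_univ_two]
  congr 2 <;> ext d <;>
    simp [vecMul, dotProduct, Fintype.sum_prod_type, Fin.sum_univ_two, T2, add_mul,
      Finset.sum_add_distrib]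

def blockSet [DecidableEq κ] (I₀ I₁ : Finset κ) : Finset (Fin 2 × κ) := {0} ×ˢ I₀ ∪ {1} ×ˢ I₁

theorem card_blockSet [DecidableEq κ] : (blockSet I₀ I₁).card = I₀.card + I₁.card := by
  rw [blockSet, card_union_of_disjoint (by simp [disjoint_left]), card_product, card_product,
    card_singleton, card_singleton, one_mul, one_mul]

theorem exists_blockSet_eq [Fintype κ] [DecidableEq κ] (J : Finset (Fin 2 × κ)) :
    ∃ I₀ I₁, blockSet I₀ I₁ = J :=
  ⟨univ.filter fun b => (0, b) ∈ J, univ.filter fun b => (1, b) ∈ J, by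
    ext ⟨c, b⟩
    fin_cases c <;> simp [blockSet]⟩

variable [Fintype κ] [DecidableEq κ] {G : Matrix κ κ F2} {t : ℕ}

theorem DistAtLeast.T2_kronecker_blockSet (h₀ : DistAtLeast G I₀ t)
    (h₁ : DistAtLeast G I₁ ((t + 1) / 2)) : DistAtLeast (T2 ⊗ₖ G) (blockSet I₀ I₁) t := by
  intro w hw hsupp
  set w₀ : κ → F2 := fun b => w (0, b)
  set w₁ : κ → F2 := fun b => w (1, b)
  have hsupp₀ : ∀ b, w₀ b ≠ 0 → b ∈ I₀ := fun b hb => by simpa [blockSet] using hsupp _ hb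
  have hsupp₁ : ∀ b, w₁ b ≠ 0 → b ∈ I₁ := fun b hb => by simpa [blockSet] using hsupp _ hb
  rw [hammingNorm_vecMul_T2_kronecker]
  change t ≤ hammingNorm ((w₀ + w₁) ᵥ* G) + hammingNorm (w₁ ᵥ* G)
  by_cases hw₁ : w₁ = 0
  · have hw₀ : w₀ ≠ 0 := by
      rintro hw₀
      refine hw (funext fun ⟨c, b⟩ => ?_)
      fin_cases c
      exacts [congrFun hw₀ b, congrFun hw₁ b]
    simpa [hw₁] using h₀ w₀ hw₀ hsupp₀
  · by_cases hw₀ : w₀ = 0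
    · have := h₁ w₁ hw₁ hsupp₁
      simp only [hw₀, zero_add]
      omega
    · rw [add_vecMul]
      exact (h₀ w₀ hw₀ hsupp₀).trans (hammingNorm_le_hammingNorm_add_add _ _)

theorem DistAtLeast.of_T2_kronecker_blockSet (h : DistAtLeast (T2 ⊗ₖ G) (blockSet I₀ I₁) t) :
    DistAtLeast G I₀ t ∧ DistAtLeast G I₁ ((t + 1) / 2) := by
  have mem_blockSet (u₀ u₁ : κ → F2) (h₀ : ∀ b, u₀ b ≠ 0 → b ∈ I₀)
      (h₁ : ∀ b, u₁ b ≠ 0 → b ∈ I₁) (x : Fin 2 × κ) (hx : ![u₀, u₁] x.1 x.2 ≠ 0) :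
      x ∈ blockSet I₀ I₁ := by
    obtain ⟨c, b⟩ := x
    fin_cases c <;> simp_all [blockSet]
  constructor
  · intro u hu hsupp
    have := h (fun x => ![u, 0] x.1 x.2) (fun h0 => hu (funext fun b => congrFun h0 (0, b)))
      (mem_blockSet u 0 hsupp (by simp))
    simpa [hammingNorm_vecMul_T2_kronecker, ← Pi.zero_def] using this
  · intro u hu hsupp
    have := h (fun x => ![0, u] x.1 x.2) (fun h0 => hu (funext fun b => congrFun h0 (1, b)))
      (mem_blockSet 0 u (by simp) hsupp)
    simp only [hammingNorm_vecMul_T2_kronecker, Matrix.cons_val_zero, Matrix.cons_val_one,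
      Pi.zero_apply, zero_add] at this
    have h2 : t ≤ 2 * hammingNorm (u ᵥ* G) := this.trans_eq (two_mul _).symm
    omega

end Plotkin

section T2pow

def t2powSuccEquiv (n : ℕ) : Fin 2 × Fin (2 ^ n) ≃ Fin (2 ^ (n + 1)) :=
  finProdFinEquiv.trans (finCongr (by rw [pow_succ, Nat.mul_comm]))

theorem T2pow_succ_eq_submatrix (n : ℕ) :
    T2pow (n + 1) =
      (T2 ⊗ₖ T2pow n).submatrix (t2powSuccEquiv n).symm (t2powSuccEquiv n).symm :=
  rfl

theorem kron_eq_submatrix {m q : ℕ} (A : Matrix (Fin m) (Fin m) F2)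
    (B : Matrix (Fin q) (Fin q) F2) :
    kron A B = (A ⊗ₖ B).submatrix finProdFinEquiv.symm finProdFinEquiv.symm :=
  rfl

theorem spec_T2pow_succ_le (n : ℕ) {K : ℕ} (hK : 1 ≤ K) (hKN : K ≤ 2 ^ (n + 1)) :
    spec (T2pow (n + 1)) K ≤
      kthLargest (specMultiset (T2pow n) + (specMultiset (T2pow n)).map (2 * ·)) K := by
  obtain ⟨I, hIcard, hI⟩ := exists_minDist_eq_spec (G := T2pow (n + 1)) hKN
  set m := spec (T2pow (n + 1)) K
  obtain ⟨I₀, I₁, hI₀₁⟩ := exists_blockSet_eq (I.map (t2powSuccEquiv n).symm.toEmbedding)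
  have hdist : DistAtLeast (T2 ⊗ₖ T2pow n) (blockSet I₀ I₁) m := by
    rw [hI₀₁, ← distAtLeast_submatrix_iff, ← T2pow_succ_eq_submatrix, ← hI]
    exact distAtLeast_minDist
  obtain ⟨h₀, h₁⟩ := hdist.of_T2_kronecker_blockSet
  have hcard : I₀.card + I₁.card = K := by rw [← card_blockSet, hI₀₁, card_map, hIcard]
  have hle : ∀ J : Finset (Fin (2 ^ n)), J.card ≤ 2 ^ n := fun J => by
    simpa using card_le_univ J
  have hc₀ : I₀.card ≤ (specMultiset (T2pow n)).countP (m ≤ ·) := by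
    rcases I₀.eq_empty_or_nonempty with rfl | hne
    · exact Nat.zero_le _
    rw [le_countP_specMultiset_iff monotone_le (card_pos.2 hne) (hle I₀)]
    exact (h₀.le_minDist hne).trans (minDist_le_spec rfl)
  have hc₁ : I₁.card ≤ (specMultiset (T2pow n)).countP (m ≤ 2 * ·) := by
    rcases I₁.eq_empty_or_nonempty with rfl | hne
    · exact Nat.zero_le _
    rw [le_countP_specMultiset_iff (monotone_le_two_mul m) (card_pos.2 hne) (hle I₁)]
    have := (h₁.le_minDist hne).trans (minDist_le_spec rfl)
    omega
  rw [← le_countP_iff_kthLargest monotone_le hK (by simp [card_specMultiset]; omega),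
    Multiset.countP_add, Multiset.countP_map, ← Multiset.countP_eq_card_filter]
  omega

end T2pow

section KronSpectrum

variable {a b : ℕ}

def kronSpectrum (A : Matrix (Fin a) (Fin a) F2) (B : Matrix (Fin b) (Fin b) F2) : Multiset ℕ :=
  (univ : Finset (Fin a × Fin b)).val.map fun ij => spec A (ij.1.val + 1) * spec B (ij.2.val + 1)

theorem card_kronSpectrum (A : Matrix (Fin a) (Fin a) F2) (B : Matrix (Fin b) (Fin b) F2) :
    Multiset.card (kronSpectrum A B) = a * b := by
  simp [kronSpectrum]

theorem countP_kronSpectrum (A : Matrix (Fin a) (Fin a) F2) (B : Matrix (Fin b) (Fin b) F2)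
    (P : ℕ → Prop) [DecidablePred P] :
    (kronSpectrum A B).countP P =
      ∑ j : Fin b, (specMultiset A).countP fun x => P (x * spec B (j.val + 1)) := by
  simp only [kronSpectrum, specMultiset, Multiset.countP_map, ← filter_val, card_val,
    card_filter, Fintype.sum_prod_type_right]

end KronSpectrum

section Realization

variable {ι κ : Type*} [Fintype ι] [Fintype κ] {G : Matrix ι ι F2} {v : ℕ → ℕ}

def SpectrumAtLeast (G : Matrix ι ι F2) (v : ℕ → ℕ) : Prop :=
  ∀ K, 1 ≤ K → K ≤ Fintype.card ι → ∃ I : Finset ι, I.card = K ∧ DistAtLeast G I (v K)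

theorem SpectrumAtLeast.exists_distAtLeast (h : SpectrumAtLeast G v) {K d : ℕ}
    (hK : K ≤ Fintype.card ι) (hd : 1 ≤ K → d ≤ v K) :
    ∃ I : Finset ι, I.card = K ∧ DistAtLeast G I d := by
  rcases Nat.eq_zero_or_pos K with rfl | hK₁
  · exact ⟨∅, card_empty, distAtLeast_empty⟩
  · obtain ⟨I, hI, hIG⟩ := h K hK₁ hK
    exact ⟨I, hI, hIG.mono subset_rfl (hd hK₁)⟩

theorem SpectrumAtLeast.submatrix (h : SpectrumAtLeast G v) (e : κ ≃ ι) :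
    SpectrumAtLeast (G.submatrix e e) v := by
  intro K hK hKN
  obtain ⟨I, hI, hIG⟩ := h K hK (by rwa [← Fintype.card_congr e])
  exact ⟨I.map e.symm.toEmbedding, by rw [card_map, hI], hIG.submatrix e⟩

theorem SpectrumAtLeast.exists_T2_kronecker [DecidableEq ι] {s : Multiset ℕ}
    (hG : SpectrumAtLeast G (kthLargest s)) (hs : Multiset.card s = Fintype.card ι) {K t : ℕ}
    (hK : K ≤ s.countP (t ≤ ·) + s.countP (t ≤ 2 * ·)) :
    ∃ I : Finset (Fin 2 × ι), I.card = K ∧ DistAtLeast (T2 ⊗ₖ G) I t := by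
  have hc₀ := s.countP_le_card (t ≤ ·)
  have hc₁ := s.countP_le_card (t ≤ 2 * ·)
  set k₀ := min K (s.countP (t ≤ ·))
  obtain ⟨I₀, hI₀, h₀⟩ := hG.exists_distAtLeast (K := k₀) (d := t) (by omega) fun hk =>
    (le_countP_iff_kthLargest (s := s) monotone_le hk (by omega)).1 (min_le_right _ _)
  obtain ⟨I₁, hI₁, h₁⟩ := hG.exists_distAtLeast (K := K - k₀) (d := (t + 1) / 2) (by omega)
    fun hk => by
      have := (le_countP_iff_kthLargest (s := s) (monotone_le_two_mul t) hk (by omega)).1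
        (by omega)
      omega
  exact ⟨blockSet I₀ I₁, by rw [card_blockSet]; omega,
    h₀.T2_kronecker_blockSet h₁⟩

end Realization

section KronPower

variable {p : ℕ}

theorem countP_kronSpectrum_T2pow_succ_le (n : ℕ) (B : Matrix (Fin p) (Fin p) F2) (t : ℕ) :
    (kronSpectrum (T2pow (n + 1)) B).countP (t ≤ ·) ≤
      (kronSpectrum (T2pow n) B).countP (t ≤ ·) +
        (kronSpectrum (T2pow n) B).countP (t ≤ 2 * ·) := by
  simp only [countP_kronSpectrum, ← sum_add_distrib]
  refine sum_le_sum fun j _ => ?_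
  refine (countP_specMultiset_le (by simp [card_specMultiset, pow_succ, mul_two])
    (fun k hk hkN => spec_T2pow_succ_le n hk hkN)
    fun _ _ hxy h => h.trans (Nat.mul_le_mul_right _ hxy)).trans_eq ?_
  rw [Multiset.countP_add, Multiset.countP_map, ← Multiset.countP_eq_card_filter]
  simp only [mul_assoc]

theorem kthLargest_kronSpectrum_T2pow_zero_le (B : Matrix (Fin p) (Fin p) F2) {K : ℕ}
    (hK : 1 ≤ K) (hKp : K ≤ p) : kthLargest (kronSpectrum (T2pow 0) B) K ≤ spec B K := by
  set t := kthLargest (kronSpectrum (T2pow 0) B) K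
  have hs₀ : spec (T2pow 0) 1 ≤ 1 := spec_le_card
  rw [← le_countP_specMultiset_iff monotone_le hK hKp]
  calc K ≤ (kronSpectrum (T2pow 0) B).countP (t ≤ ·) :=
        (le_countP_iff_kthLargest monotone_le hK (by simp [card_kronSpectrum, hKp])).2 le_rfl
    _ = #{ij : Fin 1 × Fin p | t ≤ spec (T2pow 0) (ij.1.val + 1) * spec B (ij.2.val + 1)} :=
        Multiset.countP_map _ _ _
    _ ≤ #{ij : Fin 1 × Fin p | t ≤ spec B (ij.2.val + 1)} := by
        refine card_le_card fun ij hij => ?_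
        simp only [mem_filter, mem_univ, true_and, Fin.val_eq_zero ij.1] at hij ⊢
        exact hij.trans (mul_le_of_le_one_left' hs₀)
    _ = (specMultiset B).countP (t ≤ ·) := by
        rw [countP_specMultiset]
        exact card_equiv (Equiv.uniqueProd (Fin p) (Fin 1)) (by simp)

theorem T2pow_succ_kronecker_eq_submatrix (n : ℕ) (B : Matrix (Fin p) (Fin p) F2) :
    T2pow (n + 1) ⊗ₖ B = (T2 ⊗ₖ (T2pow n ⊗ₖ B)).submatrix
      (((t2powSuccEquiv n).symm.prodCongr (Equiv.refl _)).trans (Equiv.prodAssoc _ _ _))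
      (((t2powSuccEquiv n).symm.prodCongr (Equiv.refl _)).trans (Equiv.prodAssoc _ _ _)) := by
  ext ⟨x, c⟩ ⟨y, d⟩
  simp [T2pow_succ_eq_submatrix, mul_assoc]

theorem T2pow_zero_kronecker_eq_submatrix (B : Matrix (Fin p) (Fin p) F2) :
    T2pow 0 ⊗ₖ B = B.submatrix (Equiv.uniqueProd (Fin p) (Fin 1))
      (Equiv.uniqueProd (Fin p) (Fin 1)) := by
  ext ⟨x, c⟩ ⟨y, d⟩
  obtain rfl : x = y := Subsingleton.elim (α := Fin 1) x y
  simp [T2pow]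

theorem spectrumAtLeast_T2pow_kronecker (B : Matrix (Fin p) (Fin p) F2) (n : ℕ) :
    SpectrumAtLeast (T2pow n ⊗ₖ B) (kthLargest (kronSpectrum (T2pow n) B)) := by
  induction n with
  | zero =>
    rw [T2pow_zero_kronecker_eq_submatrix]
    refine SpectrumAtLeast.submatrix (fun K hK hKp => ?_) _
    rw [Fintype.card_fin] at hKp
    obtain ⟨J, hJcard, hJ⟩ := exists_minDist_eq_spec (G := B) hKp
    exact ⟨J, hJcard, (hJ ▸ distAtLeast_minDist).mono subset_rfl
      (kthLargest_kronSpectrum_T2pow_zero_le B hK hKp)⟩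
  | succ n ih =>
    rw [T2pow_succ_kronecker_eq_submatrix]
    refine SpectrumAtLeast.submatrix (fun K hK hKN => ?_) _
    refine ih.exists_T2_kronecker (by simp [card_kronSpectrum]) ?_
    refine le_trans ?_ (countP_kronSpectrum_T2pow_succ_le n B _)
    refine (le_countP_iff_kthLargest monotone_le hK ?_).2 le_rfl
    simpa [card_kronSpectrum, pow_succ, mul_comm, mul_left_comm, mul_assoc] using hKN

end KronPower

theorem exists_info_set_achieving_kron_spectrum_general
    (p : ℕ) (Tp : Matrix (Fin p) (Fin p) F2)
    (n : ℕ) (K : ℕ) (hK1 : 1 ≤ K) (hK2 : K ≤ 2 ^ n * p) :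
    ∃ I : Finset (Fin (2 ^ n * p)), I.card = K ∧
      kthLargest
          (((Finset.univ : Finset (Fin (2 ^ n) × Fin p)).val).map
            (fun ij => spec (T2pow n) (ij.1.val + 1) * spec Tp (ij.2.val + 1))) K ≤
        minDist (kron (T2pow n) Tp) I ∧
      ∀ u : Fin (2 ^ n * p) → F2, u ≠ 0 → (∀ i, u i ≠ 0 → i ∈ I) →
        kthLargest
            (((Finset.univ : Finset (Fin (2 ^ n) × Fin p)).val).map
              (fun ij => spec (T2pow n) (ij.1.val + 1) * spec Tp (ij.2.val + 1))) K ≤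
          hammingNorm (Matrix.vecMul u (kron (T2pow n) Tp)) := by
  have hspec := (spectrumAtLeast_T2pow_kronecker Tp n).submatrix finProdFinEquiv.symm
  rw [← kron_eq_submatrix] at hspec
  obtain ⟨I, hIcard, hI⟩ := hspec K hK1 (by simpa using hK2)
  exact ⟨I, hIcard, hI.le_minDist (card_pos.1 (by omega)), hI⟩

theorem exists_info_set_achieving_kron_spectrum
    (p : ℕ) (hp : 1 ≤ p) (Tp : Matrix (Fin p) (Fin p) F2) (hTp : IsUnit Tp)
    (n : ℕ) (K : ℕ) (hK1 : 1 ≤ K) (hK2 : K ≤ 2 ^ n * p) :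
    ∃ I : Finset (Fin (2 ^ n * p)), I.card = K ∧
      kthLargest
          (((Finset.univ : Finset (Fin (2 ^ n) × Fin p)).val).map
            (fun ij => spec (T2pow n) (ij.1.val + 1) * spec Tp (ij.2.val + 1))) K ≤
        minDist (kron (T2pow n) Tp) I ∧
      ∀ u : Fin (2 ^ n * p) → F2, u ≠ 0 → (∀ i, u i ≠ 0 → i ∈ I) →
        kthLargest
            (((Finset.univ : Finset (Fin (2 ^ n) × Fin p)).val).map
              (fun ij => spec (T2pow n) (ij.1.val + 1) * spec Tp (ij.2.val + 1))) K ≤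
          hammingNorm (Matrix.vecMul u (kron (T2pow n) Tp)) :=
  exists_info_set_achieving_kron_spectrum_general p Tp n K hK1 hK2
end
end

section
/- Let M be an invertible m×m matrix over F₂ and let G = T₂ ⊗ M (block form ((M,0),(M,M)), rows 0,…,m−1 upper, rows m,…,2m−1 lower). For all nonnegative integers a ≤ m and b ≤ m with a + b ≥ 1, there exists a subset I ⊆ {0,…,2m−1} with exactly a elements in {0,…,m−1} and exactly b elements in {m,…,2m−1} such that d_G(I) ≥ φ(a,b), where φ(a,0) = S_M(a), φ(0,b) = 2·S_M(b), and φ(a,b) = min(S_M(a), 2·S_M(b)) when a ≥ 1 and b ≥ 1. -/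
open Matrix

noncomputable section

/-- The quantity φ(a,b) from the max–min recursion:
`φ(a,0) = S(a)`, `φ(0,b) = 2·S(b)`, and `φ(a,b) = min(S(a), 2·S(b))` for `a,b ≥ 1`. -/
def phi (S : ℕ → ℕ) (a b : ℕ) : ℕ :=
  if a = 0 then 2 * S b else if b = 0 then S a else min (S a) (2 * S b)


/-! Split the coordinates of `F₂^{2m}` into two blocks of length `m`. Then `u · (T₂ ⊗ M)` is
Plotkin's `(u₀ M + u₁ M | u₁ M)`, of weight `wt((u₀ + u₁) M) + wt(u₁ M)`. Take `I = A ⊔ B` with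
`A`, `B` attaining `S_M(a)` and `S_M(b)`. If `u₀ = 0` the weight is `2 wt(u₁ M) ≥ 2 S_M(b)`;
otherwise, since `u₀ M = (u₀ + u₁) M + u₁ M` over `F₂`, the triangle inequality bounds it below
by `wt(u₀ M) ≥ S_M(a)`. -/

open Finset

theorem hammingNorm_add_le {ι : Type*} [Fintype ι] {β : ι → Type*} [∀ i, AddZeroClass (β i)]
    [∀ i, DecidableEq (β i)] (x y : ∀ i, β i) :
    hammingNorm (x + y) ≤ hammingNorm x + hammingNorm y := by
  classical
  refine (card_le_card fun i hi => ?_).trans (card_union_le _ _)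
  simp only [mem_filter, mem_univ, true_and, mem_union, Pi.add_apply] at hi ⊢
  by_contra! h
  simp [h.1, h.2] at hi

theorem minDist_le {N : ℕ} (G : Matrix (Fin N) (Fin N) F2) {I : Finset (Fin N)}
    {u : Fin N → F2} (hu : u ≠ 0) (hI : ∀ i, u i ≠ 0 → i ∈ I) :
    minDist G I ≤ hammingNorm (u ᵥ* G) :=
  Nat.sInf_le ⟨u, hu, hI, rfl⟩

theorem le_minDist {N : ℕ} (G : Matrix (Fin N) (Fin N) F2) {I : Finset (Fin N)}
    (hI : I.Nonempty) {d : ℕ}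
    (h : ∀ u : Fin N → F2, u ≠ 0 → (∀ i, u i ≠ 0 → i ∈ I) → d ≤ hammingNorm (u ᵥ* G)) :
    d ≤ minDist G I := by
  obtain ⟨i, hi⟩ := hI
  refine le_csInf ⟨_, Pi.single i 1, ?_, fun j hj => ?_, rfl⟩ ?_
  · exact Pi.single_ne_zero_iff.mpr one_ne_zero
  · obtain rfl : j = i := by_contra fun hji => hj (Pi.single_eq_of_ne hji _)
    exact hi
  · rintro w ⟨u, hu, huI, rfl⟩
    exact h u hu huI

theorem exists_card_eq_minDist_eq_spec {N : ℕ} (G : Matrix (Fin N) (Fin N) F2) {K : ℕ}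
    (hK : K ≤ N) : ∃ I : Finset (Fin N), I.card = K ∧ minDist G I = spec G K := by
  have hfin : {d | ∃ I : Finset (Fin N), I.card = K ∧ minDist G I = d}.Finite :=
    (Set.finite_range (minDist G)).subset fun _ ⟨I, _, hI⟩ => ⟨I, hI⟩
  obtain ⟨I, -, hI⟩ := exists_subset_card_eq (s := (univ : Finset (Fin N))) (by simpa using hK)
  exact Nat.sSup_mem (s := {d | ∃ I : Finset (Fin N), I.card = K ∧ minDist G I = d})
    ⟨_, I, hI, rfl⟩ hfin.bddAbove

section Blocks

variable {p m : ℕ}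

@[simp]
theorem divNat_finProdFinEquiv (r : Fin p) (k : Fin m) : (finProdFinEquiv (r, k)).divNat = r :=
  congrArg Prod.fst (finProdFinEquiv.symm_apply_apply (r, k))

@[simp]
theorem modNat_finProdFinEquiv (r : Fin p) (k : Fin m) : (finProdFinEquiv (r, k)).modNat = k :=
  congrArg Prod.snd (finProdFinEquiv.symm_apply_apply (r, k))

def blockEmb (r : Fin p) : Fin m ↪ Fin (p * m) :=
  ⟨fun k => finProdFinEquiv (r, k), fun _ _ h => by simpa using h⟩

@[simp]
theorem blockEmb_apply (r : Fin p) (k : Fin m) : blockEmb r k = finProdFinEquiv (r, k) := rfl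

theorem blockEmb_surjective (i : Fin (p * m)) : ∃ r k, blockEmb r k = i :=
  ⟨i.divNat, i.modNat, finProdFinEquiv.apply_symm_apply i⟩

theorem eq_zero_of_comp_blockEmb {β : Type*} [Zero β] {v : Fin (p * m) → β}
    (h : ∀ r, v ∘ blockEmb r = 0) : v = 0 := by
  funext i
  obtain ⟨r, k, rfl⟩ := blockEmb_surjective i
  exact congrFun (h r) k

theorem hammingNorm_eq_sum_blocks {β : Type*} [Zero β] [DecidableEq β] (v : Fin (p * m) → β) :
    hammingNorm v = ∑ r, hammingNorm (v ∘ blockEmb r) := by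
  simp only [hammingNorm, card_filter]
  rw [← finProdFinEquiv.sum_comp, Fintype.sum_prod_type]
  rfl

theorem vecMul_kron_apply_blockEmb (A : Matrix (Fin p) (Fin p) F2)
    (B : Matrix (Fin m) (Fin m) F2) (u : Fin (p * m) → F2) (s : Fin p) (j : Fin m) :
    (u ᵥ* kron A B) (blockEmb s j) = ∑ r, A r s * ((u ∘ blockEmb r) ᵥ* B) j := by
  simp only [vecMul, dotProduct, kron, mul_sum]
  rw [← finProdFinEquiv.sum_comp, Fintype.sum_prod_type]
  simp only [blockEmb_apply, divNat_finProdFinEquiv, modNat_finProdFinEquiv, Function.comp_apply]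
  exact sum_congr rfl fun r _ => sum_congr rfl fun k _ => by ring

end Blocks

section KronT2

variable {m : ℕ}

theorem hammingNorm_vecMul_kron_T2 (M : Matrix (Fin m) (Fin m) F2) (u : Fin (2 * m) → F2) :
    hammingNorm (u ᵥ* kron T2 M) =
      hammingNorm ((u ∘ blockEmb 0 + u ∘ blockEmb 1) ᵥ* M) + hammingNorm ((u ∘ blockEmb 1) ᵥ* M) := by
  rw [hammingNorm_eq_sum_blocks, Fin.sum_univ_two, add_vecMul]
  congr 2 <;> funext j <;> rw [Function.comp_apply, vecMul_kron_apply_blockEmb] <;>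
    simp [Fin.sum_univ_two, T2]

def splitSet (A B : Finset (Fin m)) : Finset (Fin (2 * m)) :=
  A.map (blockEmb 0) ∪ B.map (blockEmb 1)

theorem filter_lt_splitSet (A B : Finset (Fin m)) :
    (splitSet A B).filter (fun i : Fin (2 * m) => (i : ℕ) < m) = A.map (blockEmb 0) := by
  ext i
  obtain ⟨r, k, rfl⟩ := blockEmb_surjective i
  fin_cases r <;> simp [splitSet]

theorem filter_le_splitSet (A B : Finset (Fin m)) :
    (splitSet A B).filter (fun i : Fin (2 * m) => m ≤ (i : ℕ)) = B.map (blockEmb 1) := by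
  ext i
  obtain ⟨r, k, rfl⟩ := blockEmb_surjective i
  fin_cases r <;> simp [splitSet]

theorem blockEmb_zero_mem_splitSet {A B : Finset (Fin m)} {k : Fin m} :
    blockEmb 0 k ∈ splitSet A B ↔ k ∈ A := by
  simp [splitSet]

theorem blockEmb_one_mem_splitSet {A B : Finset (Fin m)} {k : Fin m} :
    blockEmb 1 k ∈ splitSet A B ↔ k ∈ B := by
  simp [splitSet]

theorem le_minDist_kron_T2_splitSet (M : Matrix (Fin m) (Fin m) F2) {A B : Finset (Fin m)}
    (hAB : A.Nonempty ∨ B.Nonempty) {d : ℕ} (hA : A.Nonempty → d ≤ minDist M A)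
    (hB : B.Nonempty → d ≤ 2 * minDist M B) : d ≤ minDist (kron T2 M) (splitSet A B) := by
  have hne : (splitSet A B).Nonempty :=
    hAB.elim (fun h => (h.map (f := blockEmb 0)).mono subset_union_left)
      (fun h => (h.map (f := blockEmb 1)).mono subset_union_right)
  refine le_minDist _ hne fun u hu hsupp => ?_
  have hu₀ : ∀ k, (u ∘ blockEmb 0) k ≠ 0 → k ∈ A := fun k hk =>
    blockEmb_zero_mem_splitSet.1 (hsupp _ hk)
  have hu₁ : ∀ k, (u ∘ blockEmb 1) k ≠ 0 → k ∈ B := fun k hk =>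
    blockEmb_one_mem_splitSet.1 (hsupp _ hk)
  rw [hammingNorm_vecMul_kron_T2]
  by_cases h₀ : u ∘ blockEmb 0 = 0
  · have h₁ : u ∘ blockEmb 1 ≠ 0 := fun h₁ =>
      hu (eq_zero_of_comp_blockEmb fun r => by fin_cases r; exacts [h₀, h₁])
    obtain ⟨k, hk⟩ := Function.ne_iff.1 h₁
    calc d ≤ 2 * minDist M B := hB ⟨k, hu₁ k hk⟩
      _ ≤ 2 * hammingNorm ((u ∘ blockEmb 1) ᵥ* M) := by gcongr; exact minDist_le M h₁ hu₁
      _ = _ := by rw [h₀, zero_add, two_mul]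
  · obtain ⟨k, hk⟩ := Function.ne_iff.1 h₀
    calc d ≤ minDist M A := hA ⟨k, hu₀ k hk⟩
      _ ≤ hammingNorm ((u ∘ blockEmb 0) ᵥ* M) := minDist_le M h₀ hu₀
      _ = hammingNorm ((u ∘ blockEmb 0 + u ∘ blockEmb 1) ᵥ* M + (u ∘ blockEmb 1) ᵥ* M) := by
        rw [← add_vecMul]
        congr 2
        funext k
        exact (CharTwo.add_cancel_right _ _).symm
      _ ≤ _ := hammingNorm_add_le _ _

end KronT2

theorem phi_le_left (S : ℕ → ℕ) {a : ℕ} (b : ℕ) (ha : a ≠ 0) : phi S a b ≤ S a := by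
  unfold phi
  split_ifs <;> omega

theorem phi_le_right (S : ℕ → ℕ) (a : ℕ) {b : ℕ} (hb : b ≠ 0) : phi S a b ≤ 2 * S b := by
  unfold phi
  split_ifs <;> omega

theorem exists_split_info_set_kron_T2_general
    (m : ℕ) (M : Matrix (Fin m) (Fin m) F2)
    (a b : ℕ) (ha : a ≤ m) (hb : b ≤ m) (hab : 1 ≤ a + b) :
    ∃ I : Finset (Fin (2 * m)),
      (I.filter (fun i : Fin (2 * m) => (i : ℕ) < m)).card = a ∧
      (I.filter (fun i : Fin (2 * m) => m ≤ (i : ℕ))).card = b ∧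
      phi (spec M) a b ≤ minDist (kron T2 M) I := by
  obtain ⟨A, hAcard, hA⟩ := exists_card_eq_minDist_eq_spec M ha
  obtain ⟨B, hBcard, hB⟩ := exists_card_eq_minDist_eq_spec M hb
  refine ⟨splitSet A B, by rw [filter_lt_splitSet, card_map, hAcard],
    by rw [filter_le_splitSet, card_map, hBcard], ?_⟩
  refine le_minDist_kron_T2_splitSet M ?_ (fun hAne => ?_) (fun hBne => ?_)
  · rw [← card_pos, ← card_pos, hAcard, hBcard]
    omega
  · rw [hA]
    exact phi_le_left _ _ (hAcard ▸ hAne.card_pos.ne')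
  · rw [hB]
    exact phi_le_right _ _ (hBcard ▸ hBne.card_pos.ne')

theorem exists_split_info_set_kron_T2
    (m : ℕ) (M : Matrix (Fin m) (Fin m) F2) (hM : IsUnit M)
    (a b : ℕ) (ha : a ≤ m) (hb : b ≤ m) (hab : 1 ≤ a + b) :
    ∃ I : Finset (Fin (2 * m)),
      (I.filter (fun i : Fin (2 * m) => (i : ℕ) < m)).card = a ∧
      (I.filter (fun i : Fin (2 * m) => m ≤ (i : ℕ))).card = b ∧
      phi (spec M) a b ≤ minDist (kron T2 M) I :=
  exists_split_info_set_kron_T2_general m M a b ha hb hab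
end
end

section
/- Let s : {1,…,m} → ℕ be a nonincreasing sequence of positive integers, and consider the 2m-element multiset {s(1),…,s(m)} ∪ {2s(1),…,2s(m)}. For every K with 1 ≤ K ≤ 2m, the K-th largest element (with multiplicity) of this multiset equals the maximum over all pairs (a,b) of nonnegative integers with a + b = K, a ≤ m, b ≤ m, of φ(a,b), where φ(a,0) = s(a), φ(0,b) = 2·s(b), and φ(a,b) = min(s(a), 2·s(b)) when a ≥ 1 and b ≥ 1. -/
open Matrix

noncomputable section

/-!
The `K`-th largest element `L` of a multiset is characterised by: `v ≤ L` iff at least `K`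
elements are `≥ v`. In an antitone sequence the terms `≥ v` form an initial segment, so for
`a + b = K` we get `v ≤ φ(a,b)` iff `a ≤ A(v)` and `b ≤ B(v)`, where `A(v)` and `B(v)` count the
terms `≥ v` of `s` and of `2s`. Hence every `φ(a,b)` is at most `L`, and the split
`a = min(K, A(L))`, `b = K - a` attains `L`.
-/

open Finset

theorem List.Pairwise.le_getElem_iff_lt_countP {α : Type*} [LinearOrder α] {l : List α}
    (hl : l.Pairwise (· ≥ ·)) {k : ℕ} (hk : k < l.length) (v : α) :
    v ≤ l[k] ↔ k < l.countP (v ≤ ·) := by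
  have hdrop : l.drop k = l[k] :: l.drop (k + 1) := List.drop_eq_getElem_cons hk
  have hcount : l.countP (v ≤ ·) =
      (l.take k).countP (v ≤ ·) +
        ((l.drop (k + 1)).countP (v ≤ ·) + if v ≤ l[k] then 1 else 0) := by
    conv_lhs => rw [← List.take_append_drop k l, hdrop]
    simp only [List.countP_append, List.countP_cons, decide_eq_true_eq]
  by_cases hv : v ≤ l[k]
  · have hbefore : (l.take k).countP (v ≤ ·) = k := by
      rw [List.countP_eq_length.mpr fun x hx => ?_, List.length_take_of_le hk.le]
      exact decide_eq_true
        (hv.trans (hl.rel_of_mem_take_of_mem_drop hx (hdrop ▸ List.mem_cons_self)))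
    rw [hcount, hbefore, if_pos hv]
    simp only [hv, true_iff]
    omega
  · have hafter : (l.drop (k + 1)).countP (v ≤ ·) = 0 := by
      refine List.countP_eq_zero.mpr fun x hx => ?_
      have hle : x ≤ l[k] :=
        hl.rel_of_mem_take_of_mem_drop (List.mem_take_iff_getElem.mpr ⟨k, by omega, rfl⟩) hx
      simpa using hle.trans_lt (not_le.mp hv)
    have hbefore := (List.countP_le_length (p := (v ≤ ·)) (l := l.take k)).trans
      (List.length_take_le k l)
    rw [hcount, hafter, if_neg hv]
    simp only [hv, false_iff]
    omega

theorem le_kthLargest_add_one_iff {M : Multiset ℕ} {k : ℕ} (hk : k < Multiset.card M) (v : ℕ) :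
    v ≤ kthLargest M (k + 1) ↔ k < M.countP (v ≤ ·) := by
  have hsorted : (M.sort (· ≤ ·)).reverse.Pairwise (· ≥ ·) :=
    List.pairwise_reverse.mpr (Multiset.pairwise_sort _ _)
  have hlen : k < (M.sort (· ≤ ·)).reverse.length := by simpa using hk
  rw [kthLargest, Nat.add_sub_cancel, List.getD_eq_getElem _ _ hlen,
    hsorted.le_getElem_iff_lt_countP hlen, List.countP_reverse]
  conv_rhs => rw [← Multiset.sort_eq M (· ≤ ·)]
  rw [Multiset.coe_countP]

theorem le_card_filter_le_iff {α : Type*} [Preorder α] [DecidableLE α] {m : ℕ} {t : ℕ → α}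
    (ht : AntitoneOn t (Set.Icc 1 m)) {j : ℕ} (hj : j ≤ m) (v : α) :
    j ≤ #{i ∈ range m | v ≤ t (i + 1)} ↔ (j ≠ 0 → v ≤ t j) := by
  constructor
  · intro hcard hj0
    by_contra hv
    have hsub : {i ∈ range m | v ≤ t (i + 1)} ⊆ range (j - 1) := by
      intro i hi
      simp only [mem_filter, mem_range] at hi ⊢
      by_contra hij
      exact hv (hi.2.trans (ht ⟨by omega, hj⟩ ⟨by omega, by omega⟩ (by omega)))
    have := card_le_card hsub
    rw [card_range] at this
    omega
  · intro hv
    calc j = #(range j) := (card_range j).symm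
      _ ≤ #{i ∈ range m | v ≤ t (i + 1)} := card_le_card fun i hi => by
        simp only [mem_filter, mem_range] at hi ⊢
        exact ⟨by omega,
          (hv (by omega)).trans (ht ⟨by omega, by omega⟩ ⟨by omega, hj⟩ (by omega))⟩

theorem le_phi_iff {S : ℕ → ℕ} {a b v : ℕ} (hab : a + b ≠ 0) :
    v ≤ phi S a b ↔ (a ≠ 0 → v ≤ S a) ∧ (b ≠ 0 → v ≤ 2 * S b) := by
  unfold phi
  split_ifs <;> simp_all

theorem Multiset.countP_map_range {α : Type*} (p : α → Prop) [DecidablePred p] (f : ℕ → α)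
    (m : ℕ) : ((Multiset.range m).map f).countP p = #{i ∈ Finset.range m | p (f i)} := by
  simp [Multiset.countP_map, Finset.card, Finset.filter_val]

theorem isGreatest_phi {m k L : ℕ} {s : ℕ → ℕ} (hs : AntitoneOn s (Set.Icc 1 m))
    (hL : ∀ v, v ≤ L ↔
      k < #{i ∈ range m | v ≤ s (i + 1)} + #{i ∈ range m | v ≤ 2 * s (i + 1)}) :
    IsGreatest {d | ∃ a b : ℕ, a + b = k + 1 ∧ a ≤ m ∧ b ≤ m ∧ d = phi s a b} L := by
  have hs2 : AntitoneOn (2 * s ·) (Set.Icc 1 m) := fun i hi j hj hij =>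
    Nat.mul_le_mul_left 2 (hs hi hj hij)
  have hphi : ∀ {a b} v, a + b = k + 1 → a ≤ m → b ≤ m → (v ≤ phi s a b ↔
      a ≤ #{i ∈ range m | v ≤ s (i + 1)} ∧ b ≤ #{i ∈ range m | v ≤ 2 * s (i + 1)}) := by
    intro a b v hab ha hb
    rw [le_phi_iff (by omega), le_card_filter_le_iff hs ha, le_card_filter_le_iff hs2 hb]
  have hub :
      L ∈ upperBounds {d | ∃ a b : ℕ, a + b = k + 1 ∧ a ≤ m ∧ b ≤ m ∧ d = phi s a b} := by
    rintro _ ⟨a, b, hab, ha, hb, rfl⟩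
    obtain ⟨hA, hB⟩ := (hphi _ hab ha hb).1 le_rfl
    exact (hL _).2 (by omega)
  have hAB := (hL L).1 le_rfl
  have hA : #{i ∈ range m | L ≤ s (i + 1)} ≤ m := (card_filter_le _ _).trans_eq (card_range m)
  have hB : #{i ∈ range m | L ≤ 2 * s (i + 1)} ≤ m :=
    (card_filter_le _ _).trans_eq (card_range m)
  set a := min (k + 1) #{i ∈ range m | L ≤ s (i + 1)}
  have hattained : ∀ {b}, a + b = k + 1 → b ≤ m → L = phi s a b := fun hab hb =>
    le_antisymm ((hphi L hab (by omega) hb).2 ⟨min_le_right _ _, by omega⟩)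
      (hub ⟨_, _, hab, by omega, hb, rfl⟩)
  exact ⟨⟨a, k + 1 - a, by omega, by omega, by omega, hattained (by omega) (by omega)⟩, hub⟩

theorem kthLargest_merge_doubled_antitone_general
    (m : ℕ) (s : ℕ → ℕ)
    (hanti : ∀ j k, 1 ≤ j → j ≤ k → k ≤ m → s k ≤ s j)
    (K : ℕ) (hK1 : 1 ≤ K) (hK2 : K ≤ 2 * m) :
    kthLargest
        ((Multiset.range m).map (fun i => s (i + 1)) +
          (Multiset.range m).map (fun i => 2 * s (i + 1))) K =
      sSup {d | ∃ a b : ℕ, a + b = K ∧ a ≤ m ∧ b ≤ m ∧ d = phi s a b} := by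
  obtain ⟨k, rfl⟩ : ∃ k, K = k + 1 := ⟨K - 1, by omega⟩
  refine (IsGreatest.csSup_eq (isGreatest_phi (fun i hi j hj hij => hanti i j hi.1 hij hj.2)
    fun v => ?_)).symm
  rw [le_kthLargest_add_one_iff ?_, Multiset.countP_add, Multiset.countP_map_range,
    Multiset.countP_map_range]
  simp only [Multiset.card_add, Multiset.card_map, Multiset.card_range]
  omega

theorem kthLargest_merge_doubled_antitone
    (m : ℕ) (s : ℕ → ℕ)
    (hpos : ∀ k, 1 ≤ k → k ≤ m → 1 ≤ s k)
    (hanti : ∀ j k, 1 ≤ j → j ≤ k → k ≤ m → s k ≤ s j)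
    (K : ℕ) (hK1 : 1 ≤ K) (hK2 : K ≤ 2 * m) :
    kthLargest
        ((Multiset.range m).map (fun i => s (i + 1)) +
          (Multiset.range m).map (fun i => 2 * s (i + 1))) K =
      sSup {d | ∃ a b : ℕ, a + b = K ∧ a ≤ m ∧ b ≤ m ∧ d = phi s a b} :=
  kthLargest_merge_doubled_antitone_general m s hanti K hK1 hK2
end
end
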